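/- arXiv:0810.3147 — 4 statements merged into one kernel-verified Lean document; each statement's English description precedes it below -/
import Mathlib

section
/- Let K be a field, and let M be a (G_K,A)-module of rank r ≥ 1. Let 𝔭 ⊆ A be a nonzero prime ideal, and suppose there exists a constant C_𝔭 such that I(𝔭^n) ≤ C_𝔭 for all n ≥ 1. Then there exists a constant C > 0 such that for every finite separable extension L/K inside K^sep, card(M[𝔭^∞](L)) ≤ C·[L:K]^{1/r}. -/
open Submodule

section GaloisModulePreamble

variable {A : Type*} [CommRing A]
variable {K Ksep : Type*} [Field K] [Field Ksep] [Algebra K Ksep]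
variable {M : Type*} [AddCommGroup M] [Module A M]

/-- Restriction of an `A`-linear automorphism of `M` to the `𝔞`-torsion submodule `M[𝔞]`. -/
def LinearEquiv.restrictTorsionBySet (f : M ≃ₗ[A] M) (𝔞 : Ideal A) :
    torsionBySet A M 𝔞 ≃ₗ[A] torsionBySet A M 𝔞 :=
  LinearEquiv.ofSubmodules f _ _ <| by
    ext x
    simp only [Submodule.mem_map, mem_torsionBySet_iff]
    constructor
    · rintro ⟨y, hy, rfl⟩ a
      simpa using congrArg f (hy a)
    · intro hx
      refine ⟨f.symm x, fun a => ?_, f.apply_symm_apply x⟩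
      simpa using congrArg f.symm (hx a)

/-- The Galois representation `ρ_𝔞 : G_K → Aut_A(M[𝔞])` induced by an action
`ρ : G_K →* Aut_A(M)`. -/
def galRep (ρ : (Ksep ≃ₐ[K] Ksep) →* (M ≃ₗ[A] M)) (𝔞 : Ideal A) :
    (Ksep ≃ₐ[K] Ksep) →* (torsionBySet A M 𝔞 ≃ₗ[A] torsionBySet A M 𝔞) where
  toFun σ := (ρ σ).restrictTorsionBySet 𝔞
  map_one' := by
    apply LinearEquiv.toLinearMap_injective
    apply LinearMap.ext
    intro x
    apply Subtype.ext
    simp [LinearEquiv.restrictTorsionBySet]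
  map_mul' σ τ := by
    apply LinearEquiv.toLinearMap_injective
    apply LinearMap.ext
    intro x
    apply Subtype.ext
    simp [LinearEquiv.restrictTorsionBySet]

/-- The index `I(𝔞)` of the image of the Galois representation `ρ_𝔞` in `Aut_A(M[𝔞])`. -/
noncomputable def galIndex (ρ : (Ksep ≃ₐ[K] Ksep) →* (M ≃ₗ[A] M)) (𝔞 : Ideal A) : ℕ :=
  (galRep ρ 𝔞).range.index

/-- `M` is a `(G_K, A)`-module of rank `r` via the action `ρ : G_K →* Aut_A(M)`:
every torsion element is fixed by an open subgroup of `G_K` (equivalently, has open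
stabilizer, for the Krull topology), and `M[𝔞] ≅ (A ⧸ 𝔞)^r` for every nonzero ideal `𝔞`. -/
structure IsGaloisModule (ρ : (Ksep ≃ₐ[K] Ksep) →* (M ≃ₗ[A] M)) (r : ℕ) : Prop where
  openStab : ∀ x : M, x ∈ torsion A M → IsOpen {σ : Ksep ≃ₐ[K] Ksep | ρ σ x = x}
  rankEq : ∀ 𝔞 : Ideal A, 𝔞 ≠ ⊥ →
    Nonempty (torsionBySet A M (𝔞 : Set A) ≃ₗ[A] (Fin r → A ⧸ 𝔞))

/-- The `L`-rational points of a subset `X ⊆ M`: the elements of `X` fixed by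
`Gal(Ksep/L)`. -/
def galPoints (ρ : (Ksep ≃ₐ[K] Ksep) →* (M ≃ₗ[A] M)) (L : IntermediateField K Ksep)
    (X : Set M) : Set M :=
  {x ∈ X | ∀ σ ∈ L.fixingSubgroup, ρ σ x = x}

/-- The subgroup of `G_K` fixing a subset `H ⊆ M` pointwise. -/
def fixingSubgroupOf (ρ : (Ksep ≃ₐ[K] Ksep) →* (M ≃ₗ[A] M)) (H : Set M) :
    Subgroup (Ksep ≃ₐ[K] Ksep) where
  carrier := {σ | ∀ x ∈ H, ρ σ x = x}
  one_mem' := by simp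
  mul_mem' := by
    intro σ τ hσ hτ x hx
    simp only [map_mul]
    change ρ σ (ρ τ x) = x
    rw [hτ x hx, hσ x hx]
  inv_mem' := by
    intro σ hσ x hx
    simp only [map_inv]
    conv_lhs => rw [← hσ x hx]
    exact (ρ σ).symm_apply_apply x

/-- The field `K(H)` generated over `K` by a set `H` of points of `M`: the fixed field
of the subgroup of `G_K` fixing `H` pointwise. -/
noncomputable def fieldGenBy (ρ : (Ksep ≃ₐ[K] Ksep) →* (M ≃ₗ[A] M)) (H : Set M) :
    IntermediateField K Ksep :=
  IntermediateField.fixedField (fixingSubgroupOf ρ H)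

end GaloisModulePreamble

/-!
If `M[𝔭^∞](L)` is infinite its `Nat.card` is `0`; otherwise it lies in some `M[𝔭^N]`. Write
`W = M[𝔭^N] ≅ (A/𝔭^N)^r`, `T = W(L)`, `q = |A/𝔭|`, and let `S ≤ Aut_A(W)` be the pointwise
stabiliser of `T`. The image of `Gal(Ksep/L)` lies in `S`, so `[Aut W : S] ≤ [L:K] · I(𝔭^N)`.
On the other hand `g ↦ g - 1` embeds `S` into `Hom(W/T, W)`, which has at most `|W/T|^r`
elements because `|Hom(U, A/𝔭^N)| ≤ |U|` for every finite `U` killed by `𝔭^N`; and `Aut W`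
contains the `q^((N-1)r²)` matrices `1 + X` with `X` having entries in the nilpotent ideal
`𝔭/𝔭^N`. Comparing `|Aut W| = [Aut W : S] · |S|` with `|W| = |T| · |W/T| = q^(Nr)` gives
`|T|^r ≤ q^(r²) · [L:K] · I(𝔭^N)`.
-/

instance LinearMap.finite_of_finite {R U X : Type*} [Semiring R] [AddCommMonoid U] [Module R U]
    [AddCommMonoid X] [Module R X] [Finite U] [Finite X] : Finite (U →ₗ[R] X) :=
  FunLike.finite _

instance LinearEquiv.finite_of_finite {R U : Type*} [Semiring R] [AddCommMonoid U] [Module R U]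
    [Finite U] : Finite (U ≃ₗ[R] U) :=
  Finite.of_injective _ DFunLike.coe_injective

instance Submodule.finite_quotient {R U : Type*} [Ring R] [AddCommGroup U] [Module R U] [Finite U]
    (C : Submodule R U) : Finite (U ⧸ C) :=
  Finite.of_surjective _ C.mkQ_surjective

theorem Submodule.card_linearMap_le_mul {R U X : Type*} [CommRing R] [AddCommGroup U]
    [Module R U] [AddCommGroup X] [Module R X] [Finite U] [Finite X] (C : Submodule R U) :
    Nat.card (U →ₗ[R] X) ≤ Nat.card (C →ₗ[R] X) * Nat.card (U ⧸ C →ₗ[R] X) := by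
  let res := LinearMap.lcomp R X C.subtype
  have hker : Nat.card (LinearMap.ker res) ≤ Nat.card (U ⧸ C →ₗ[R] X) := by
    refine Nat.card_le_card_of_surjective (fun g => ⟨g ∘ₗ C.mkQ, ?_⟩) fun f => ?_
    · ext y
      simp [res, (Quotient.mk_eq_zero C).mpr y.2]
    · exact ⟨C.liftQ f fun y hy => LinearMap.congr_fun f.2 ⟨y, hy⟩, Subtype.ext (C.liftQ_mkQ _ _)⟩
  calc Nat.card (U →ₗ[R] X) = Nat.card (LinearMap.range res) * Nat.card (LinearMap.ker res) := by
        rw [card_eq_card_quotient_mul_card (LinearMap.ker res),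
          Nat.card_congr res.quotKerEquivRange.toEquiv, mul_comm]
    _ ≤ _ := Nat.mul_le_mul (Nat.card_le_card_of_injective _ Subtype.val_injective) hker

theorem card_fixingSubgroup_le_card_linearMap {R W : Type*} [Ring R] [AddCommGroup W]
    [Module R W] [Finite W] (T : Submodule R W) :
    Nat.card (fixingSubgroup (W ≃ₗ[R] W) (T : Set W)) ≤ Nat.card (W ⧸ T →ₗ[R] W) := by
  refine Nat.card_le_card_of_injective
    (fun g => T.liftQ (((g : W ≃ₗ[R] W) : W →ₗ[R] W) - LinearMap.id) fun x hx => ?_)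
    fun g h hgh => ?_
  · simp [LinearMap.mem_ker, ← LinearEquiv.smul_def, (mem_fixingSubgroup_iff _).mp g.2 x hx]
  · have hgh' := congrArg (· ∘ₗ T.mkQ) hgh
    simp only [liftQ_mkQ, sub_left_inj] at hgh'
    exact Subtype.ext (LinearEquiv.toLinearMap_injective hgh')

theorem Matrix.pow_apply_mem_pow {n R : Type*} [Fintype n] [DecidableEq n] [CommSemiring R]
    {I : Ideal R} {M : Matrix n n R} (hM : ∀ i j, M i j ∈ I) (k : ℕ) (i j : n) :
    (M ^ k) i j ∈ I ^ k := by
  induction k generalizing i j with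
  | zero => simp
  | succ k ih =>
    rw [pow_succ M k, Matrix.mul_apply, pow_succ I k]
    exact Ideal.sum_mem _ fun l _ => Ideal.mul_mem_mul (ih i l) (hM l j)

theorem Matrix.card_pow_le_card_units {n R : Type*} [Fintype n] [DecidableEq n] [CommRing R]
    [Finite R] {I : Ideal R} (hI : IsNilpotent I) :
    Nat.card I ^ (Fintype.card n * Fintype.card n) ≤ Nat.card (Matrix n n R)ˣ := by
  obtain ⟨k, hk⟩ := hI
  have hunit (m : n → n → I) : IsUnit (1 + Matrix.of fun i j => (m i j : R)) :=
    IsNilpotent.isUnit_one_add ⟨k, Matrix.ext fun i j => by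
      simpa [hk] using Matrix.pow_apply_mem_pow (M := Matrix.of fun i j => (m i j : R))
        (fun i j => (m i j).2) k i j⟩
  have hinj : Function.Injective fun m => (hunit m).unit := by
    intro m m' h
    have h' := congrArg (fun u : (Matrix n n R)ˣ => (u : Matrix n n R)) h
    simp only [IsUnit.unit_spec, add_right_inj, EmbeddingLike.apply_eq_iff_eq] at h'
    funext i j
    exact Subtype.ext (congrFun (congrFun h' i) j)
  calc Nat.card I ^ (Fintype.card n * Fintype.card n) = Nat.card (n → n → I) := by
        simp [Nat.card_fun, pow_mul]
    _ ≤ _ := Nat.card_le_card_of_injective _ hinj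

theorem card_units_matrix_le_card_linearEquiv {A R W n : Type*} [CommRing A] [CommRing R]
    [Algebra A R] [Fintype n] [DecidableEq n] [AddCommGroup W] [Module A W] [Finite W]
    (e : W ≃ₗ[A] (n → R)) :
    Nat.card (Matrix n n R)ˣ ≤ Nat.card (W ≃ₗ[A] W) := by
  let toAut (u : (Matrix n n R)ˣ) : W ≃ₗ[A] W :=
    e ≪≫ₗ (LinearMap.GeneralLinearGroup.generalLinearEquiv R (n → R)
      (Matrix.GeneralLinearGroup.toLin u)).restrictScalars A ≪≫ₗ e.symm
  have hconj : Function.Injective fun f : (n → R) ≃ₗ[A] (n → R) => e ≪≫ₗ f ≪≫ₗ e.symm :=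
    fun f g hfg => LinearEquiv.ext fun v => by
      simpa using LinearEquiv.congr_fun hfg (e.symm v)
  exact Nat.card_le_card_of_injective toAut <| hconj.comp <|
    (LinearEquiv.restrictScalars_injective A).comp <|
      (MulEquiv.injective _).comp (MulEquiv.injective _)

namespace Ideal

variable {A : Type*} [CommRing A] [IsDedekindDomain A]

theorem mem_pow_sub_of_forall_mul_mem_pow {I : Ideal A} (hI : I ≠ ⊥) {j N : ℕ} (hjN : j ≤ N)
    {x : A} (hx : ∀ c ∈ I ^ j, c * x ∈ I ^ N) : x ∈ I ^ (N - j) := by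
  have hle : Ideal.span {x} * I ^ j ≤ I ^ (N - j) * I ^ j := by
    rw [← pow_add, Nat.sub_add_cancel hjN, mul_le]
    intro a ha c hc
    obtain ⟨d, rfl⟩ := mem_span_singleton'.mp ha
    simpa only [mul_comm, mul_left_comm] using mul_mem_left _ d (hx c hc)
  have hdvd : I ^ (N - j) ∣ Ideal.span {x} :=
    (mul_dvd_mul_iff_right (pow_ne_zero j hI)).mp (dvd_iff_le.mpr hle)
  exact dvd_iff_le.mp hdvd (mem_span_singleton_self x)

variable {𝔭 : Ideal A} [𝔭.IsPrime]

theorem card_quotient_pow_of_isPrime (h𝔭 : 𝔭 ≠ ⊥) (n : ℕ) :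
    Nat.card (A ⧸ 𝔭 ^ n) = Nat.card (A ⧸ 𝔭) ^ n := by
  simpa only [cardQuot_apply] using cardQuot_pow_of_prime h𝔭 (i := n)

variable [Finite (A ⧸ 𝔭)]

theorem card_map_quotient_pow (h𝔭 : 𝔭 ≠ ⊥) {b N : ℕ} (hbN : b ≤ N) :
    Nat.card ((𝔭 ^ b).map (Quotient.mk (𝔭 ^ N))) = Nat.card (A ⧸ 𝔭) ^ (N - b) := by
  have := finite_quotient_pow (IsNoetherian.noetherian 𝔭) N
  have hsplit := card_eq_card_quotient_mul_card ((𝔭 ^ b).map (Quotient.mk (𝔭 ^ N)))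
  rw [Nat.card_congr (DoubleQuot.quotQuotEquivQuotOfLE (pow_le_pow_right hbN)).toEquiv,
    card_quotient_pow_of_isPrime h𝔭, card_quotient_pow_of_isPrime h𝔭] at hsplit
  apply Nat.eq_of_mul_eq_mul_right (pow_pos (Nat.card_pos (α := A ⧸ 𝔭)) b)
  rw [← pow_add, Nat.sub_add_cancel hbN, hsplit]

/-- `f ↦ f 1` embeds `Hom(A/𝔭^j, A/𝔭^N)` into the `𝔭^j`-torsion of `A/𝔭^N`, which is
`𝔭^(N-j)/𝔭^N`. -/
theorem card_linearMap_quotient_pow_le (h𝔭 : 𝔭 ≠ ⊥) {j N : ℕ} (hjN : j ≤ N) :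
    Nat.card (A ⧸ 𝔭 ^ j →ₗ[A] A ⧸ 𝔭 ^ N) ≤ Nat.card (A ⧸ 𝔭) ^ j := by
  have := finite_quotient_pow (IsNoetherian.noetherian 𝔭) N
  have hmem (f : A ⧸ 𝔭 ^ j →ₗ[A] A ⧸ 𝔭 ^ N) :
      f 1 ∈ (𝔭 ^ (N - j)).map (Quotient.mk (𝔭 ^ N)) := by
    obtain ⟨x, hx⟩ := Quotient.mk_surjective (f 1)
    rw [← hx]
    refine mem_map_of_mem _ (mem_pow_sub_of_forall_mul_mem_pow h𝔭 hjN fun c hc => ?_)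
    have hc1 : c • (1 : A ⧸ 𝔭 ^ j) = 0 := by
      rw [Algebra.smul_def, mul_one, Quotient.algebraMap_eq, Quotient.eq_zero_iff_mem]
      exact hc
    have hfc := congrArg f hc1
    rwa [map_smul, map_zero, ← hx, Algebra.smul_def, Quotient.algebraMap_eq, ← map_mul,
      Quotient.eq_zero_iff_mem] at hfc
  have hinj : Function.Injective fun f => (⟨f 1, hmem f⟩ : (𝔭 ^ (N - j)).map (Quotient.mk _)) :=
    fun f g hfg => Submodule.linearMap_qext _ (LinearMap.ext_ring (congrArg Subtype.val hfg))
  calc _ ≤ _ := Nat.card_le_card_of_injective _ hinj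
    _ = _ := by rw [card_map_quotient_pow h𝔭 (Nat.sub_le N j), Nat.sub_sub_self hjN]

end Ideal

section PrimePowerTorsion

variable {A : Type*} [CommRing A] [IsDedekindDomain A] {𝔭 : Ideal A} [𝔭.IsPrime]
  [Finite (A ⧸ 𝔭)] {U : Type*} [AddCommGroup U] [Module A U]

theorem card_linearMap_span_singleton_le (h𝔭 : 𝔭 ≠ ⊥) {N : ℕ} {x : U}
    (hx : 𝔭 ^ N ≤ Ideal.torsionOf A U x) :
    Nat.card (A ∙ x →ₗ[A] A ⧸ 𝔭 ^ N) ≤ Nat.card (A ∙ x) := by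
  obtain ⟨j, hjN, hj⟩ :=
    (dvd_prime_pow (Ideal.prime_of_isPrime h𝔭 ‹_›) N).mp (Ideal.dvd_iff_le.mpr hx)
  let e : (A ⧸ 𝔭 ^ j) ≃ₗ[A] A ∙ x := (quotEquivOfEq _ _ (associated_iff_eq.mp hj).symm).trans
    (Ideal.quotTorsionOfEquivSpanSingleton A U x)
  rw [← Nat.card_congr e.toEquiv,
    ← Nat.card_congr (e.arrowCongr (LinearEquiv.refl A (A ⧸ 𝔭 ^ N))).toEquiv,
    Ideal.card_quotient_pow_of_isPrime h𝔭]
  exact Ideal.card_linearMap_quotient_pow_le h𝔭 hjN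

theorem card_linearMap_quotient_pow_le_card (h𝔭 : 𝔭 ≠ ⊥) (N : ℕ) [Finite U]
    (hU : Module.IsTorsionBySet A U (𝔭 ^ N : Ideal A)) :
    Nat.card (U →ₗ[A] A ⧸ 𝔭 ^ N) ≤ Nat.card U := by
  have := Ideal.finite_quotient_pow (IsNoetherian.noetherian 𝔭) N
  induction h : Nat.card U using Nat.strong_induction_on generalizing U with
  | _ n ih =>
  rcases subsingleton_or_nontrivial U with hU0 | hU0
  · rw [← h]
    exact (Finite.card_le_one_iff_subsingleton.mpr inferInstance).trans Nat.card_pos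
  obtain ⟨x, hx⟩ := exists_ne (0 : U)
  let C := A ∙ x
  have hC : 1 < Nat.card C := by
    have : Nontrivial C :=
      ⟨⟨⟨x, mem_span_singleton_self x⟩, 0, fun h => hx (congrArg Subtype.val h)⟩⟩
    exact Finite.one_lt_card
  have hsplit : Nat.card U = Nat.card C * Nat.card (U ⧸ C) := card_eq_card_quotient_mul_card C
  have hlt : Nat.card (U ⧸ C) < n := by
    rw [← h, hsplit]
    exact lt_mul_left Nat.card_pos hC
  calc Nat.card (U →ₗ[A] A ⧸ 𝔭 ^ N)
      ≤ Nat.card (C →ₗ[A] A ⧸ 𝔭 ^ N) * Nat.card (U ⧸ C →ₗ[A] A ⧸ 𝔭 ^ N) :=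
        C.card_linearMap_le_mul
    _ ≤ Nat.card C * Nat.card (U ⧸ C) :=
        Nat.mul_le_mul (card_linearMap_span_singleton_le h𝔭 fun c hc => hU (a := ⟨c, hc⟩))
          (ih _ hlt (hU.quotient C) rfl)
    _ = n := by rw [← h, hsplit]

theorem card_linearMap_pi_quotient_pow_le (h𝔭 : 𝔭 ≠ ⊥) (N : ℕ) (ι : Type*) [Finite ι] [Finite U]
    (hU : Module.IsTorsionBySet A U (𝔭 ^ N : Ideal A)) :
    Nat.card (U →ₗ[A] ι → A ⧸ 𝔭 ^ N) ≤ Nat.card U ^ Nat.card ι := by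
  have := Ideal.finite_quotient_pow (IsNoetherian.noetherian 𝔭) N
  calc Nat.card (U →ₗ[A] ι → A ⧸ 𝔭 ^ N) ≤ Nat.card (ι → U →ₗ[A] A ⧸ 𝔭 ^ N) :=
        Nat.card_le_card_of_injective (fun f i => LinearMap.proj i ∘ₗ f)
          (Function.LeftInverse.injective (g := LinearMap.pi) fun f => LinearMap.pi_proj_comp f)
    _ ≤ Nat.card U ^ Nat.card ι := by
        rw [Nat.card_fun]
        exact Nat.pow_le_pow_left (card_linearMap_quotient_pow_le_card h𝔭 N hU) _

theorem card_quotient_pow_le_card_linearEquiv (h𝔭 : 𝔭 ≠ ⊥) {N : ℕ} (r : ℕ) [Finite U]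
    (e : U ≃ₗ[A] (Fin r → A ⧸ 𝔭 ^ N)) :
    Nat.card (A ⧸ 𝔭) ^ ((N - 1) * (r * r)) ≤ Nat.card (U ≃ₗ[A] U) := by
  have := Ideal.finite_quotient_pow (IsNoetherian.noetherian 𝔭) N
  have hnil : IsNilpotent (𝔭.map (Ideal.Quotient.mk (𝔭 ^ N))) :=
    ⟨N, by rw [← Ideal.map_pow, Ideal.map_quotient_self, Ideal.zero_eq_bot]⟩
  calc Nat.card (A ⧸ 𝔭) ^ ((N - 1) * (r * r))
      ≤ Nat.card ((𝔭 ^ 1).map (Ideal.Quotient.mk (𝔭 ^ N))) ^ (r * r) := by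
        rcases N.eq_zero_or_pos with rfl | hN
        · simpa using Nat.one_le_pow _ _ Nat.card_pos
        · rw [Ideal.card_map_quotient_pow h𝔭 hN, pow_mul]
    _ ≤ Nat.card (Matrix (Fin r) (Fin r) (A ⧸ 𝔭 ^ N))ˣ := by
        simpa using Matrix.card_pow_le_card_units (n := Fin r) hnil
    _ ≤ Nat.card (U ≃ₗ[A] U) := card_units_matrix_le_card_linearEquiv e

theorem card_pow_le_index_fixingSubgroup_mul (h𝔭 : 𝔭 ≠ ⊥) {N r : ℕ}
    (e : U ≃ₗ[A] (Fin r → A ⧸ 𝔭 ^ N)) (T : Submodule A U) :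
    Nat.card T ^ r ≤
      (fixingSubgroup (U ≃ₗ[A] U) (T : Set U)).index * Nat.card (A ⧸ 𝔭) ^ (r * r) := by
  have := Ideal.finite_quotient_pow (IsNoetherian.noetherian 𝔭) N
  have : Finite U := Finite.of_equiv _ e.symm.toEquiv
  set q := Nat.card (A ⧸ 𝔭)
  set S := fixingSubgroup (U ≃ₗ[A] U) (T : Set U)
  have hU : Nat.card U = q ^ (N * r) := by
    rw [Nat.card_congr e.toEquiv, Nat.card_fun, Ideal.card_quotient_pow_of_isPrime h𝔭,
      Nat.card_fin, pow_mul]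
  have htors : Module.IsTorsionBySet A (U ⧸ T) (𝔭 ^ N : Ideal A) := by
    refine (Module.isTorsionBySet_iff_subset_annihilator A U).mpr ?_ |>.quotient T
    simp [e.annihilator_eq, Module.annihilator_pi, Ideal.annihilator_quotient]
  have hS : Nat.card S ≤ Nat.card (U ⧸ T) ^ r :=
    calc Nat.card S ≤ Nat.card (U ⧸ T →ₗ[A] U) := card_fixingSubgroup_le_card_linearMap T
      _ = Nat.card (U ⧸ T →ₗ[A] Fin r → A ⧸ 𝔭 ^ N) :=
          Nat.card_congr ((LinearEquiv.refl A _).arrowCongr e).toEquiv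
      _ ≤ Nat.card (U ⧸ T) ^ r := by
          simpa using card_linearMap_pi_quotient_pow_le h𝔭 N (Fin r) htors
  have hAut := card_quotient_pow_le_card_linearEquiv h𝔭 r e
  rw [← S.index_mul_card] at hAut
  have hsplit : Nat.card U = Nat.card T * Nat.card (U ⧸ T) := card_eq_card_quotient_mul_card T
  refine Nat.le_of_mul_le_mul_right ?_ (pow_pos Nat.card_pos ((N - 1) * (r * r)) : 0 < q ^ _)
  calc Nat.card T ^ r * q ^ ((N - 1) * (r * r)) ≤ Nat.card T ^ r * (S.index * Nat.card S) :=
        Nat.mul_le_mul_left _ hAut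
    _ ≤ Nat.card T ^ r * (S.index * Nat.card (U ⧸ T) ^ r) := by gcongr
    _ = S.index * q ^ (N * r * r) := by rw [pow_mul, ← hU, hsplit, mul_pow]; ring
    _ ≤ S.index * q ^ (r * r + (N - 1) * (r * r)) := by
        gcongr
        · exact Nat.card_pos
        · rcases N with _ | n
          · simp
          · rw [Nat.add_sub_cancel]
            exact le_of_eq (by ring)
    _ = S.index * q ^ (r * r) * q ^ ((N - 1) * (r * r)) := by rw [pow_add, mul_assoc]

end PrimePowerTorsion

theorem Set.Finite.exists_subset_torsionBySet_pow {A M : Type*} [CommRing A] [AddCommGroup M]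
    [Module A M] {I : Ideal A} {T : Set M} (hT : T.Finite)
    (hsub : T ⊆ {x | ∃ n, 1 ≤ n ∧ x ∈ torsionBySet A M (I ^ n : Ideal A)}) :
    ∃ N, 1 ≤ N ∧ T ⊆ torsionBySet A M (I ^ N : Ideal A) := by
  have hmono : Monotone fun n => (torsionBySet A M (I ^ (n + 1) : Ideal A) : Set M) :=
    fun m n hmn => torsionBySet_le_torsionBySet_of_subset (Ideal.pow_le_pow_right (by omega))
  obtain ⟨n, hn⟩ := hmono.directed_le.exists_mem_subset_of_finset_subset_biUnion
    (s := hT.toFinset) fun x hx => by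
      obtain ⟨k, hk, hxk⟩ := hsub (hT.mem_toFinset.mp hx)
      exact Set.mem_iUnion.mpr ⟨k - 1, by rwa [Nat.sub_add_cancel hk]⟩
  exact ⟨n + 1, by omega, by simpa using hn⟩

section GaloisModule

variable {A : Type*} [CommRing A] {K Ksep : Type*} [Field K] [Field Ksep] [Algebra K Ksep]
  {M : Type*} [AddCommGroup M] [Module A M]

/-- `M[𝔞](L)`, as a submodule of `M[𝔞]`. -/
def galInvariants (ρ : (Ksep ≃ₐ[K] Ksep) →* (M ≃ₗ[A] M)) (L : IntermediateField K Ksep)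
    (𝔞 : Ideal A) : Submodule A (torsionBySet A M 𝔞) where
  carrier := {x | ∀ σ ∈ L.fixingSubgroup, galRep ρ 𝔞 σ x = x}
  add_mem' hx hy σ hσ := by rw [map_add, hx σ hσ, hy σ hσ]
  zero_mem' _ _ := map_zero _
  smul_mem' c _ hx σ hσ := by rw [map_smul, hx σ hσ]

theorem card_galInvariants (ρ : (Ksep ≃ₐ[K] Ksep) →* (M ≃ₗ[A] M))
    (L : IntermediateField K Ksep) (𝔞 : Ideal A) :
    Nat.card (galInvariants ρ L 𝔞) = Nat.card (galPoints ρ L (torsionBySet A M 𝔞)) :=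
  Nat.card_congr
    { toFun x := ⟨x.1, x.1.2, fun σ hσ => congrArg Subtype.val (x.2 σ hσ)⟩
      invFun x := ⟨⟨x.1, x.2.1⟩, fun σ hσ => Subtype.ext (x.2.2 σ hσ)⟩
      left_inv _ := rfl
      right_inv _ := rfl }

theorem index_fixingSubgroup_galInvariants_le [IsGalois K Ksep]
    (ρ : (Ksep ≃ₐ[K] Ksep) →* (M ≃ₗ[A] M)) (L : IntermediateField K Ksep)
    [FiniteDimensional K L] (𝔞 : Ideal A) [Finite (torsionBySet A M 𝔞)] :
    (fixingSubgroup (torsionBySet A M 𝔞 ≃ₗ[A] torsionBySet A M 𝔞)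
      (galInvariants ρ L 𝔞 : Set (torsionBySet A M 𝔞))).index ≤
        Module.finrank K L * galIndex ρ 𝔞 := by
  set H := L.fixingSubgroup
  have hH : H.index = Module.finrank K L :=
    (IntermediateField.finrank_eq_fixingSubgroup_index (L := L)).symm
  have : H.FiniteIndex := ⟨hH ▸ Module.finrank_pos.ne'⟩
  have hle : H.map (galRep ρ 𝔞) ≤
      fixingSubgroup _ (galInvariants ρ L 𝔞 : Set (torsionBySet A M 𝔞)) := by
    rintro _ ⟨σ, hσ, rfl⟩
    exact (mem_fixingSubgroup_iff _).mpr fun x hx => hx σ hσ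
  calc _ ≤ (H.map (galRep ρ 𝔞)).index := Subgroup.index_antitone hle
    _ = (H ⊔ (galRep ρ 𝔞).ker).index * galIndex ρ 𝔞 := Subgroup.index_map _ _
    _ ≤ H.index * galIndex ρ 𝔞 := Nat.mul_le_mul_right _ (Subgroup.index_antitone le_sup_left)
    _ = Module.finrank K L * galIndex ρ 𝔞 := by rw [hH]

variable [IsGalois K Ksep] [IsDedekindDomain A] {𝔭 : Ideal A} [𝔭.IsPrime] [Finite (A ⧸ 𝔭)]

theorem card_galPoints_torsionBySet_pow_le (h𝔭 : 𝔭 ≠ ⊥)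
    (ρ : (Ksep ≃ₐ[K] Ksep) →* (M ≃ₗ[A] M)) (L : IntermediateField K Ksep)
    [FiniteDimensional K L] {N r : ℕ}
    (e : torsionBySet A M (𝔭 ^ N : Ideal A) ≃ₗ[A] (Fin r → A ⧸ 𝔭 ^ N)) :
    Nat.card (galPoints ρ L (torsionBySet A M (𝔭 ^ N : Ideal A))) ^ r ≤
      Nat.card (A ⧸ 𝔭) ^ (r * r) * (Module.finrank K L * galIndex ρ (𝔭 ^ N)) := by
  have := Ideal.finite_quotient_pow (IsNoetherian.noetherian 𝔭) N
  have : Finite (torsionBySet A M (𝔭 ^ N : Ideal A)) := Finite.of_equiv _ e.symm.toEquiv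
  rw [← card_galInvariants, mul_comm]
  exact (card_pow_le_index_fixingSubgroup_mul h𝔭 e _).trans
    (Nat.mul_le_mul_right _ (index_fixingSubgroup_galInvariants_le ρ L _))

theorem exists_card_galPoints_primePowerTorsion_pow_le (h𝔭 : 𝔭 ≠ ⊥)
    (ρ : (Ksep ≃ₐ[K] Ksep) →* (M ≃ₗ[A] M)) {r : ℕ} (hr : r ≠ 0)
    (hM : ∀ 𝔞 : Ideal A, 𝔞 ≠ ⊥ → Nonempty (torsionBySet A M 𝔞 ≃ₗ[A] (Fin r → A ⧸ 𝔞)))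
    (L : IntermediateField K Ksep) [FiniteDimensional K L] :
    ∃ N, 1 ≤ N ∧
      Nat.card (galPoints ρ L {x | ∃ n, 1 ≤ n ∧ x ∈ torsionBySet A M (𝔭 ^ n : Ideal A)}) ^ r ≤
        Nat.card (A ⧸ 𝔭) ^ (r * r) * (Module.finrank K L * galIndex ρ (𝔭 ^ N)) := by
  set T := galPoints ρ L {x | ∃ n, 1 ≤ n ∧ x ∈ torsionBySet A M (𝔭 ^ n : Ideal A)}
  rcases T.finite_or_infinite with hT | hT
  · obtain ⟨N, hN, hTN⟩ := hT.exists_subset_torsionBySet_pow fun x hx => hx.1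
    obtain ⟨e⟩ := hM _ (pow_ne_zero N h𝔭)
    have := Ideal.finite_quotient_pow (IsNoetherian.noetherian 𝔭) N
    have hfin : (torsionBySet A M (𝔭 ^ N : Ideal A) : Set M).Finite :=
      Set.finite_coe_iff.mp (Finite.of_equiv _ e.symm.toEquiv)
    have hTle : Nat.card T ≤ Nat.card (galPoints ρ L (torsionBySet A M (𝔭 ^ N : Ideal A))) :=
      Nat.card_mono (hfin.subset fun x hx => hx.1) fun x hx => ⟨hTN hx, hx.2⟩
    exact ⟨N, hN, (Nat.pow_le_pow_left hTle r).trans (card_galPoints_torsionBySet_pow_le h𝔭 ρ L e)⟩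
  · refine ⟨1, le_rfl, ?_⟩
    rw [@Nat.card_eq_zero_of_infinite _ hT.to_subtype, zero_pow hr]
    exact Nat.zero_le _

end GaloisModule

theorem primePowerTorsion_bound_general
    {A : Type*} [CommRing A] [IsDedekindDomain A]
    (hAfin : ∀ 𝔞 : Ideal A, 𝔞 ≠ ⊥ → Finite (A ⧸ 𝔞))
    {K Ksep : Type*} [Field K] [Field Ksep] [Algebra K Ksep] [IsSepClosure K Ksep]
    {M : Type*} [AddCommGroup M] [Module A M]
    (ρ : (Ksep ≃ₐ[K] Ksep) →* (M ≃ₗ[A] M)) (r : ℕ) (hr : 1 ≤ r)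
    (hGM : IsGaloisModule ρ r)
    (𝔭 : Ideal A) (h𝔭 : 𝔭.IsPrime) (h𝔭0 : 𝔭 ≠ ⊥)
    (C𝔭 : ℝ) (hC𝔭 : ∀ n : ℕ, 1 ≤ n → (galIndex ρ (𝔭 ^ n) : ℝ) ≤ C𝔭) :
    ∃ C : ℝ, 0 < C ∧ ∀ L : IntermediateField K Ksep, FiniteDimensional K L →
      (Nat.card (galPoints ρ L
          {x : M | ∃ n : ℕ, 1 ≤ n ∧ x ∈ torsionBySet A M ((𝔭 ^ n : Ideal A) : Set A)}) : ℝ)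
        ≤ C * (Module.finrank K L : ℝ) ^ ((1 : ℝ) / r) := by
  have : Finite (A ⧸ 𝔭) := hAfin 𝔭 h𝔭0
  have hq : (0 : ℝ) < Nat.card (A ⧸ 𝔭) := Nat.cast_pos.mpr Nat.card_pos
  set B : ℝ := Nat.card (A ⧸ 𝔭) ^ (r * r) * max C𝔭 1 with hB_def
  have hB : 0 < B := mul_pos (pow_pos hq _) (lt_max_of_lt_right one_pos)
  refine ⟨B ^ ((1 : ℝ) / r), Real.rpow_pos_of_pos hB _, fun L hL => ?_⟩
  obtain ⟨N, hN, hcard⟩ :=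
    exists_card_galPoints_primePowerTorsion_pow_le h𝔭0 ρ (by omega) hGM.rankEq L
  rw [← Real.mul_rpow hB.le (Nat.cast_nonneg _), one_div,
    Real.le_rpow_inv_iff_of_pos (Nat.cast_nonneg _) (by positivity) (by positivity),
    Real.rpow_natCast]
  calc _ ≤ Nat.card (A ⧸ 𝔭) ^ (r * r) * (Module.finrank K L * galIndex ρ (𝔭 ^ N) : ℝ) := by
        exact_mod_cast hcard
    _ ≤ Nat.card (A ⧸ 𝔭) ^ (r * r) * (Module.finrank K L * max C𝔭 1) := by
        gcongr
        exact (hC𝔭 N hN).trans (le_max_left _ _)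
    _ = B * Module.finrank K L := by rw [hB_def]; ring

/-- **Theorem (prime-power torsion bound).**
Let `K` be a field and `M` a `(G_K, A)`-module of rank `r ≥ 1`, where `A` is a Dedekind
domain, not a field, all of whose proper quotients are finite. Let `𝔭 ⊆ A` be a nonzero
prime ideal and suppose the indices `I(𝔭^n)` are bounded by a constant `C𝔭`. Then there
is a constant `C > 0` such that `|M[𝔭^∞](L)| ≤ C · [L:K] ^ (1/r)` for every finite
separable extension `L/K` inside `Ksep`. -/
theorem primePowerTorsion_bound
    {A : Type*} [CommRing A] [IsDomain A] [IsDedekindDomain A] (hA : ¬IsField A)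
    (hAfin : ∀ 𝔞 : Ideal A, 𝔞 ≠ ⊥ → Finite (A ⧸ 𝔞))
    {K Ksep : Type*} [Field K] [Field Ksep] [Algebra K Ksep] [IsSepClosure K Ksep]
    {M : Type*} [AddCommGroup M] [Module A M]
    (ρ : (Ksep ≃ₐ[K] Ksep) →* (M ≃ₗ[A] M)) (r : ℕ) (hr : 1 ≤ r)
    (hGM : IsGaloisModule ρ r)
    (𝔭 : Ideal A) (h𝔭 : 𝔭.IsPrime) (h𝔭0 : 𝔭 ≠ ⊥)
    (C𝔭 : ℝ) (hC𝔭 : ∀ n : ℕ, 1 ≤ n → (galIndex ρ (𝔭 ^ n) : ℝ) ≤ C𝔭) :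
    ∃ C : ℝ, 0 < C ∧ ∀ L : IntermediateField K Ksep, FiniteDimensional K L →
      (Nat.card (galPoints ρ L
          {x : M | ∃ n : ℕ, 1 ≤ n ∧ x ∈ torsionBySet A M ((𝔭 ^ n : Ideal A) : Set A)}) : ℝ)
        ≤ C * (Module.finrank K L : ℝ) ^ ((1 : ℝ) / r) :=
  primePowerTorsion_bound_general hAfin ρ r hr hGM 𝔭 h𝔭 h𝔭0 C𝔭 hC𝔭
end

section
/- Let K be a field, let M be a (G_K,A)-module of rank r ≥ 1, and let 𝔭 ⊆ A be a nonzero prime ideal such that there exists a constant C_𝔭 with I(𝔭^n) ≤ C_𝔭 for all n ≥ 1. For n ≥ 1 let L_n := K(M[𝔭^n]). Then there exists a constant C > 0 such that for all n ≥ 1, card(M[𝔭^∞](L_n)) ≥ C·[L_n:K]^{1/r}. -/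
open Submodule

/-!
Take `C = 1`. The kernel `N` of `ρ_{𝔭ⁿ}` is open, so `L_n` is its fixed field and
`[L_n : K] = [G_K : N] = |im ρ_{𝔭ⁿ}| ≤ |Aut_A(M[𝔭ⁿ])| ≤ |M[𝔭ⁿ]| ^ r`, an automorphism of
`M[𝔭ⁿ] ≅ (A/𝔭ⁿ)^r` being determined by the images of `r` generators. As
`M[𝔭ⁿ] ⊆ M[𝔭^∞](L_n)`, it remains to show that `M[𝔭^∞](L_n)` is finite (`Nat.card` of an
infinite set is `0`). Let `x` be `L_n`-rational and `l` least with `x ∈ M[𝔭^l]`. For `c ∈ 𝔭`,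
multiplication by `1 + c` is an automorphism of `M[𝔭^l]` (`c` acts nilpotently), so the orbit
of `x` under `Aut_A(M[𝔭^l])` contains `x + 𝔭x`, which has at least `l` points because
`𝔭x ⊋ 𝔭²x ⊋ ⋯ ⊋ 𝔭^l x = 0`. The image of `N` fixes `x` and has index at most
`[G_K : N] · I(𝔭^l) ≤ [G_K : N] · C_𝔭`, which therefore bounds `l` independently of `x`.
-/

section TorsionModules

variable {A T : Type*} [CommRing A] [AddCommGroup T] [Module A T]

lemma card_linearEquiv_le_pow [Finite T] {ι : Type*} [Fintype ι] {v : ι → T}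
    (hv : span A (Set.range v) = ⊤) : Nat.card (T ≃ₗ[A] T) ≤ Nat.card T ^ Fintype.card ι := by
  have hinj : Function.Injective fun (g : T ≃ₗ[A] T) i => g (v i) := fun f g hfg =>
    LinearEquiv.toLinearMap_injective <| LinearMap.ext_on_range hv fun i => congrFun hfg i
  simpa [Nat.card_fun] using Nat.card_le_card_of_injective _ hinj

lemma span_range_single_one_eq_top (𝔞 : Ideal A) (r : ℕ) :
    span A (Set.range fun i : Fin r => (Pi.single i 1 : Fin r → A ⧸ 𝔞)) = ⊤ := by
  rw [← restrictScalars_span A (A ⧸ 𝔞) Ideal.Quotient.mk_surjective, restrictScalars_eq_top_iff]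
  convert (Pi.basisFun (A ⧸ 𝔞) (Fin r)).span_eq
  simp

lemma card_linearEquiv_le_pow_of_equiv_pi [Finite T] {𝔞 : Ideal A} {r : ℕ}
    (e : T ≃ₗ[A] (Fin r → A ⧸ 𝔞)) : Nat.card (T ≃ₗ[A] T) ≤ Nat.card T ^ r := by
  have hv : span A (Set.range fun i => e.symm (Pi.single i 1)) = ⊤ := by
    rw [Set.range_comp' e.symm, ← LinearEquiv.coe_coe, span_image, span_range_single_one_eq_top,
      Submodule.map_top, LinearEquiv.range]
  simpa using card_linearEquiv_le_pow hv

lemma exists_linearEquiv_apply_eq_add_smul {c : A} {k : ℕ}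
    (hc : Module.IsTorsionBy A T (c ^ k)) : ∃ g : T ≃ₗ[A] T, ∀ y, g y = y + c • y := by
  have hnil : IsNilpotent (c • LinearMap.id : Module.End A T) :=
    ⟨k, LinearMap.ext fun y => by simp [smul_pow, hc]⟩
  obtain ⟨u, hu⟩ := hnil.isUnit_one_add
  exact ⟨LinearMap.GeneralLinearGroup.generalLinearEquiv A T u, fun y => by
    simp [LinearMap.GeneralLinearGroup.coeFn_generalLinearEquiv, hu]⟩

lemma smul_span_singleton_eq_bot_iff {𝔞 : Ideal A} {x : T} :
    𝔞 • span A {x} = ⊥ ↔ x ∈ torsionBySet A T 𝔞 := by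
  simp [Submodule.eq_bot_iff, mem_smul_span_singleton, mem_torsionBySet_iff]

lemma pow_smul_eq_self_of_smul_eq_self {𝔭 : Ideal A} {P : Submodule A T} (h : 𝔭 • P = P)
    (k : ℕ) : 𝔭 ^ k • P = P := by
  induction k with
  | zero => simp
  | succ k ih => rw [pow_succ, Submodule.mul_smul, h, ih]

lemma pow_succ_smul_lt_pow_smul {𝔭 : Ideal A} {P : Submodule A T} {j l : ℕ} (hjl : j < l)
    (hl : 𝔭 ^ l • P = ⊥) (hj : 𝔭 ^ j • P ≠ ⊥) : 𝔭 ^ (j + 1) • P < 𝔭 ^ j • P := by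
  refine lt_of_le_of_ne (smul_mono_left (Ideal.pow_le_pow_right j.le_succ)) fun h => hj ?_
  rw [pow_succ', Submodule.mul_smul] at h
  rw [← hl, ← Nat.sub_add_cancel hjl.le, pow_add, Submodule.mul_smul,
    pow_smul_eq_self_of_smul_eq_self h]

lemma le_card_smul_of_pow_smul_eq_bot [Finite T] {𝔭 : Ideal A} {P : Submodule A T} {l : ℕ}
    (hl : 𝔭 ^ l • P = ⊥) (hmin : ∀ j < l, 𝔭 ^ j • P ≠ ⊥) :
    l ≤ Nat.card (𝔭 • P : Submodule A T) := by
  have hchain : ∀ d ≤ l, d + 1 ≤ Nat.card (𝔭 ^ (l - d) • P : Submodule A T) := by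
    intro d
    induction d with
    | zero => exact fun _ => Nat.card_pos
    | succ d ih =>
      intro hd
      have hlt := Set.Finite.card_lt_card (Set.toFinite _)
        (pow_succ_smul_lt_pow_smul (by omega) hl (hmin (l - (d + 1)) (by omega)))
      rw [show l - (d + 1) + 1 = l - d by omega] at hlt
      have := ih (by omega)
      simp only [SetLike.coe_sort_coe] at hlt
      omega
  rcases Nat.eq_zero_or_pos l with rfl | hl0
  · exact Nat.zero_le _
  simpa [Nat.sub_sub_self hl0, Nat.sub_add_cancel hl0] using hchain (l - 1) (by omega)

lemma card_smul_span_le_index_stabilizer [Finite T] {𝔭 : Ideal A} {k : ℕ}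
    (hT : Module.IsTorsionBySet A T (𝔭 ^ k : Ideal A)) (x : T) :
    Nat.card (𝔭 • span A {x} : Submodule A T) ≤
      (MulAction.stabilizer (T ≃ₗ[A] T) x).index := by
  have hmem : ∀ y ∈ 𝔭 • span A {x}, x + y ∈ MulAction.orbit (T ≃ₗ[A] T) x := by
    intro y hy
    obtain ⟨c, hc, rfl⟩ := mem_smul_span_singleton.mp hy
    obtain ⟨g, hg⟩ := exists_linearEquiv_apply_eq_add_smul
      fun z => @hT z ⟨c ^ k, Ideal.pow_mem_pow hc k⟩
    exact ⟨g, hg x⟩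
  rw [MulAction.index_stabilizer, ← Nat.card_coe_set_eq]
  exact Nat.card_le_card_of_injective (fun y => ⟨x + y, hmem y y.2⟩)
    fun y z h => Subtype.ext (add_left_cancel (congrArg Subtype.val h))

lemma le_index_stabilizer [Finite T] {𝔭 : Ideal A} {l : ℕ}
    (hT : Module.IsTorsionBySet A T (𝔭 ^ l : Ideal A)) {x : T}
    (hmin : ∀ j < l, x ∉ torsionBySet A T (𝔭 ^ j : Ideal A)) :
    l ≤ (MulAction.stabilizer (T ≃ₗ[A] T) x).index := by
  have hl : 𝔭 ^ l • span A {x} = ⊥ := by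
    rw [smul_span_singleton_eq_bot_iff, mem_torsionBySet_iff]
    exact fun a => @hT x a
  exact (le_card_smul_of_pow_smul_eq_bot hl fun j hj h =>
    hmin j hj (smul_span_singleton_eq_bot_iff.mp h)).trans
      (card_smul_span_le_index_stabilizer hT x)

end TorsionModules

lemma Subgroup.index_map_le_index_mul {G G' : Type*} [Group G] [Group G'] (f : G →* G')
    (H : Subgroup G) [H.FiniteIndex] : (H.map f).index ≤ H.index * f.range.index := by
  rw [Subgroup.index_map]
  exact Nat.mul_le_mul_right _ <|
    Nat.le_of_dvd (Nat.pos_of_ne_zero H.index_ne_zero_of_finite) (H.index_dvd_of_le le_sup_left)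

lemma Subgroup.finiteIndex_of_isOpen {G : Type*} [Group G] [TopologicalSpace G]
    [IsTopologicalGroup G] [CompactSpace G] {H : Subgroup G} (hH : IsOpen (H : Set G)) :
    H.FiniteIndex :=
  have := H.quotient_finite_of_isOpen hH
  Subgroup.finiteIndex_of_finite_quotient

lemma IntermediateField.fixingSubgroup_fixedField_of_isOpen {K L : Type*} [Field K] [Field L]
    [Algebra K L] [IsGalois K L] {N : Subgroup (L ≃ₐ[K] L)} (hN : IsOpen (N : Set (L ≃ₐ[K] L))) :
    (fixedField N).fixingSubgroup = N :=
  InfiniteGalois.fixingSubgroup_fixedField ⟨N, N.isClosed_of_isOpen hN⟩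

lemma Real.rpow_one_div_le_of_le_pow {d c : ℝ} {r : ℕ} (hd : 0 ≤ d) (hc : 1 ≤ c)
    (h : d ≤ c ^ r) : d ^ (1 / (r : ℝ)) ≤ c := by
  rcases Nat.eq_zero_or_pos r with rfl | hr
  · simpa using hc
  calc d ^ (1 / (r : ℝ)) ≤ (c ^ r) ^ ((r : ℝ)⁻¹) := by
        rw [one_div]; exact Real.rpow_le_rpow hd h (by positivity)
    _ = c := Real.pow_rpow_inv_natCast (by linarith) hr.ne'

section GaloisModules

variable {A K Ksep M : Type*} [CommRing A] [Field K] [Field Ksep] [Algebra K Ksep]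
  [AddCommGroup M] [Module A M] {ρ : (Ksep ≃ₐ[K] Ksep) →* (M ≃ₗ[A] M)} {r : ℕ}

lemma fixingSubgroupOf_torsionBySet_eq_ker (𝔞 : Ideal A) :
    fixingSubgroupOf ρ (torsionBySet A M 𝔞 : Set M) = (galRep ρ 𝔞).ker := by
  ext σ
  rw [MonoidHom.mem_ker]
  refine ⟨fun hσ => LinearEquiv.ext fun y => Subtype.ext (hσ y y.2), fun hσ y hy => ?_⟩
  exact congrArg Subtype.val (LinearEquiv.congr_fun hσ ⟨y, hy⟩)

lemma IsGaloisModule.finite_torsionBySet (hGM : IsGaloisModule ρ r) {𝔞 : Ideal A} (h𝔞 : 𝔞 ≠ ⊥)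
    [Finite (A ⧸ 𝔞)] : Finite (torsionBySet A M 𝔞) :=
  Finite.of_equiv _ (hGM.rankEq 𝔞 h𝔞).some.toEquiv.symm

lemma IsGaloisModule.isOpen_fixingSubgroupOf [IsDomain A] (hGM : IsGaloisModule ρ r)
    {𝔞 : Ideal A} (h𝔞 : 𝔞 ≠ ⊥) [Finite (A ⧸ 𝔞)] :
    IsOpen (fixingSubgroupOf ρ (torsionBySet A M 𝔞 : Set M) : Set (Ksep ≃ₐ[K] Ksep)) := by
  have := hGM.finite_torsionBySet h𝔞
  have heq : (fixingSubgroupOf ρ (torsionBySet A M 𝔞 : Set M) : Set (Ksep ≃ₐ[K] Ksep)) =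
      ⋂ y : torsionBySet A M 𝔞, {σ | ρ σ y = y} := by
    ext σ
    simp [fixingSubgroupOf]
  rw [heq]
  refine isOpen_iInter_of_finite fun y => hGM.openStab y ?_
  obtain ⟨a, ha, ha0⟩ := Submodule.exists_mem_ne_zero_of_ne_bot h𝔞
  exact (mem_torsion_iff _).mpr
    ⟨⟨a, mem_nonZeroDivisors_of_ne_zero ha0⟩, (mem_torsionBySet_iff _ _).mp y.2 ⟨a, ha⟩⟩

lemma le_index_mul_galIndex {𝔭 : Ideal A} {l : ℕ} [Finite (torsionBySet A M (𝔭 ^ l : Ideal A))]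
    (N : Subgroup (Ksep ≃ₐ[K] Ksep)) [N.FiniteIndex] {x : M}
    (hx : x ∈ torsionBySet A M (𝔭 ^ l : Ideal A))
    (hmin : ∀ j < l, x ∉ torsionBySet A M (𝔭 ^ j : Ideal A)) (hfix : ∀ σ ∈ N, ρ σ x = x) :
    l ≤ N.index * galIndex ρ (𝔭 ^ l) := by
  set T := torsionBySet A M (𝔭 ^ l : Ideal A)
  have : Finite (T ≃ₗ[A] T) := Finite.of_injective _ DFunLike.coe_injective
  let x' : T := ⟨x, hx⟩
  have hstab : N.map (galRep ρ (𝔭 ^ l)) ≤ MulAction.stabilizer (T ≃ₗ[A] T) x' := by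
    rintro _ ⟨σ, hσ, rfl⟩
    exact Subtype.ext (hfix σ hσ)
  calc l ≤ (MulAction.stabilizer (T ≃ₗ[A] T) x').index :=
        le_index_stabilizer (torsionBySet_isTorsionBySet _) fun j hj h =>
          hmin j hj (by simpa [mem_torsionBySet_iff, Subtype.ext_iff] using h)
    _ ≤ (N.map (galRep ρ (𝔭 ^ l))).index := Subgroup.index_antitone hstab
    _ ≤ N.index * galIndex ρ (𝔭 ^ l) := Subgroup.index_map_le_index_mul _ N

lemma IsGaloisModule.mem_torsionBySet_of_forall_fixed [IsDomain A] (hGM : IsGaloisModule ρ r)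
    (hAfin : ∀ 𝔞 : Ideal A, 𝔞 ≠ ⊥ → Finite (A ⧸ 𝔞)) {𝔭 : Ideal A} (h𝔭0 : 𝔭 ≠ ⊥) {C : ℝ}
    (hC : ∀ n : ℕ, 1 ≤ n → (galIndex ρ (𝔭 ^ n) : ℝ) ≤ C)
    (N : Subgroup (Ksep ≃ₐ[K] Ksep)) [N.FiniteIndex] {x : M} {m : ℕ}
    (hx : x ∈ torsionBySet A M (𝔭 ^ m : Ideal A)) (hfix : ∀ σ ∈ N, ρ σ x = x) :
    x ∈ torsionBySet A M (𝔭 ^ ⌈N.index * C⌉₊ : Ideal A) := by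
  classical
  have hex : ∃ l, x ∈ torsionBySet A M (𝔭 ^ l : Ideal A) := ⟨m, hx⟩
  refine torsionBySet_le_torsionBySet_pow _ _ ?_ 𝔭 (Nat.find_spec hex)
  rcases Nat.eq_zero_or_pos (Nat.find hex) with hl | hl
  · omega
  have := hAfin _ (pow_ne_zero (Nat.find hex) h𝔭0)
  have := hGM.finite_torsionBySet (pow_ne_zero (Nat.find hex) h𝔭0)
  have hle := le_index_mul_galIndex N (Nat.find_spec hex) (fun j hj => Nat.find_min hex hj) hfix
  have : (Nat.find hex : ℝ) ≤ N.index * C := by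
    calc (Nat.find hex : ℝ) ≤ N.index * galIndex ρ (𝔭 ^ Nat.find hex) := by exact_mod_cast hle
      _ ≤ N.index * C := by gcongr; exact hC _ hl
  exact_mod_cast this.trans (Nat.le_ceil _)

lemma IsGaloisModule.finite_galPoints [IsDomain A] (hGM : IsGaloisModule ρ r)
    (hAfin : ∀ 𝔞 : Ideal A, 𝔞 ≠ ⊥ → Finite (A ⧸ 𝔞)) {𝔭 : Ideal A} (h𝔭0 : 𝔭 ≠ ⊥) {C : ℝ}
    (hC : ∀ n : ℕ, 1 ≤ n → (galIndex ρ (𝔭 ^ n) : ℝ) ≤ C)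
    (L : IntermediateField K Ksep) [L.fixingSubgroup.FiniteIndex] :
    (galPoints ρ L {x : M | ∃ m : ℕ, 1 ≤ m ∧ x ∈ torsionBySet A M (𝔭 ^ m : Ideal A)}).Finite := by
  set m₀ := ⌈L.fixingSubgroup.index * C⌉₊
  have := hAfin _ (pow_ne_zero m₀ h𝔭0)
  have := hGM.finite_torsionBySet (pow_ne_zero m₀ h𝔭0)
  refine (Set.toFinite (torsionBySet A M (𝔭 ^ m₀ : Ideal A) : Set M)).subset ?_
  rintro x ⟨⟨m, -, hx⟩, hxfix⟩
  exact hGM.mem_torsionBySet_of_forall_fixed hAfin h𝔭0 hC _ hx hxfix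

lemma IsGaloisModule.finrank_fieldGenBy_le [IsDomain A] [IsGalois K Ksep]
    (hGM : IsGaloisModule ρ r) {𝔞 : Ideal A} (h𝔞 : 𝔞 ≠ ⊥) [Finite (A ⧸ 𝔞)] :
    Module.finrank K (fieldGenBy ρ (torsionBySet A M 𝔞 : Set M)) ≤
      Nat.card (torsionBySet A M 𝔞) ^ r := by
  have := hGM.finite_torsionBySet h𝔞
  set T := torsionBySet A M 𝔞
  have : Finite (T ≃ₗ[A] T) := Finite.of_injective _ DFunLike.coe_injective
  calc Module.finrank K (fieldGenBy ρ (T : Set M)) = (galRep ρ 𝔞).ker.index := by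
        rw [IntermediateField.finrank_eq_fixingSubgroup_index, fieldGenBy,
          IntermediateField.fixingSubgroup_fixedField_of_isOpen (hGM.isOpen_fixingSubgroupOf h𝔞),
          fixingSubgroupOf_torsionBySet_eq_ker]
    _ = Nat.card (galRep ρ 𝔞).range := Subgroup.index_ker _
    _ ≤ Nat.card (T ≃ₗ[A] T) := Nat.card_le_card_of_injective _ Subtype.val_injective
    _ ≤ Nat.card T ^ r := card_linearEquiv_le_pow_of_equiv_pi (hGM.rankEq 𝔞 h𝔞).some

end GaloisModules

theorem primePowerTorsion_bound_sharp_general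
    {A : Type*} [CommRing A] [IsDomain A]
    (hAfin : ∀ 𝔞 : Ideal A, 𝔞 ≠ ⊥ → Finite (A ⧸ 𝔞))
    {K Ksep : Type*} [Field K] [Field Ksep] [Algebra K Ksep] [IsSepClosure K Ksep]
    {M : Type*} [AddCommGroup M] [Module A M]
    (ρ : (Ksep ≃ₐ[K] Ksep) →* (M ≃ₗ[A] M)) (r : ℕ)
    (hGM : IsGaloisModule ρ r)
    (𝔭 : Ideal A) (h𝔭0 : 𝔭 ≠ ⊥)
    (C𝔭 : ℝ) (hC𝔭 : ∀ n : ℕ, 1 ≤ n → (galIndex ρ (𝔭 ^ n) : ℝ) ≤ C𝔭) :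
    ∃ C : ℝ, 0 < C ∧ ∀ n : ℕ, 1 ≤ n →
      letI Ln : IntermediateField K Ksep :=
        fieldGenBy ρ ((torsionBySet A M ((𝔭 ^ n : Ideal A) : Set A) : Submodule A M) : Set M)
      C * (Module.finrank K Ln : ℝ) ^ ((1 : ℝ) / r)
        ≤ (Nat.card (galPoints ρ Ln
            {x : M | ∃ m : ℕ, 1 ≤ m ∧ x ∈ torsionBySet A M ((𝔭 ^ m : Ideal A) : Set A)}) : ℝ) := by
  refine ⟨1, one_pos, fun n hn => ?_⟩
  have h𝔭n : 𝔭 ^ n ≠ ⊥ := pow_ne_zero n h𝔭0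
  have := hAfin _ h𝔭n
  set T := torsionBySet A M (𝔭 ^ n : Ideal A)
  set L := fieldGenBy ρ (T : Set M)
  have hNopen := hGM.isOpen_fixingSubgroupOf h𝔭n
  have hfixL : L.fixingSubgroup = fixingSubgroupOf ρ (T : Set M) :=
    IntermediateField.fixingSubgroup_fixedField_of_isOpen hNopen
  have : L.fixingSubgroup.FiniteIndex := Subgroup.finiteIndex_of_isOpen (hfixL ▸ hNopen)
  set P := galPoints ρ L {x : M | ∃ m : ℕ, 1 ≤ m ∧ x ∈ torsionBySet A M (𝔭 ^ m : Ideal A)}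
  have hTP : (T : Set M) ⊆ P := fun x hx => ⟨⟨n, hn, hx⟩, fun σ hσ => (hfixL ▸ hσ) x hx⟩
  have hPfin : P.Finite := hGM.finite_galPoints hAfin h𝔭0 hC𝔭 L
  have hP : 1 ≤ Nat.card P :=
    Nat.card_pos_iff.mpr ⟨⟨⟨0, hTP T.zero_mem⟩⟩, hPfin.to_subtype⟩
  rw [one_mul]
  refine Real.rpow_one_div_le_of_le_pow (Nat.cast_nonneg _) (by exact_mod_cast hP) ?_
  exact_mod_cast (hGM.finrank_fieldGenBy_le h𝔭n).trans
    (Nat.pow_le_pow_left (Nat.card_mono hPfin hTP) r)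

/-- **Theorem (sharpness of the prime-power torsion bound).**
Let `K` be a field and `M` a `(G_K, A)`-module of rank `r ≥ 1`, where `A` is a Dedekind
domain, not a field, all of whose proper quotients are finite. Let `𝔭 ⊆ A` be a nonzero
prime ideal with indices `I(𝔭^n)` bounded by a constant `C𝔭`. For `n ≥ 1` let
`L_n = K(M[𝔭^n])`. Then there is a constant `C > 0` such that
`|M[𝔭^∞](L_n)| ≥ C · [L_n:K] ^ (1/r)` for all `n ≥ 1`. -/
theorem primePowerTorsion_bound_sharp
    {A : Type*} [CommRing A] [IsDomain A] [IsDedekindDomain A] (hA : ¬IsField A)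
    (hAfin : ∀ 𝔞 : Ideal A, 𝔞 ≠ ⊥ → Finite (A ⧸ 𝔞))
    {K Ksep : Type*} [Field K] [Field Ksep] [Algebra K Ksep] [IsSepClosure K Ksep]
    {M : Type*} [AddCommGroup M] [Module A M]
    (ρ : (Ksep ≃ₐ[K] Ksep) →* (M ≃ₗ[A] M)) (r : ℕ) (hr : 1 ≤ r)
    (hGM : IsGaloisModule ρ r)
    (𝔭 : Ideal A) (h𝔭 : 𝔭.IsPrime) (h𝔭0 : 𝔭 ≠ ⊥)
    (C𝔭 : ℝ) (hC𝔭 : ∀ n : ℕ, 1 ≤ n → (galIndex ρ (𝔭 ^ n) : ℝ) ≤ C𝔭) :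
    ∃ C : ℝ, 0 < C ∧ ∀ n : ℕ, 1 ≤ n →
      letI Ln : IntermediateField K Ksep :=
        fieldGenBy ρ ((torsionBySet A M ((𝔭 ^ n : Ideal A) : Set A) : Submodule A M) : Set M)
      C * (Module.finrank K Ln : ℝ) ^ ((1 : ℝ) / r)
        ≤ (Nat.card (galPoints ρ Ln
            {x : M | ∃ m : ℕ, 1 ≤ m ∧ x ∈ torsionBySet A M ((𝔭 ^ m : Ideal A) : Set A)}) : ℝ) :=
  primePowerTorsion_bound_sharp_general hAfin ρ r hGM 𝔭 h𝔭0 C𝔭 hC𝔭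
end

section
/- Let A be a Dedekind domain which is not a field such that A/𝔞 is finite for every nonzero ideal 𝔞 ⊆ A, let 𝔞 ⊆ A be a nonzero ideal, and let r ≥ 1. Then the group GL_r(A/𝔞) of invertible r×r matrices over A/𝔞 is finite of cardinality card(GL_r(A/𝔞)) = |𝔞|^{r²}·∏_{𝔭 | 𝔞} ∏_{i=1}^{r} (1 - |𝔭|^{-i}), the outer product being over the (finitely many) nonzero prime ideals 𝔭 dividing 𝔞 (an equality of real numbers). -/
/-- The absolute norm `|𝔞|` of an ideal `𝔞 ⊆ A`: the cardinality of `A ⧸ 𝔞`. -/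
noncomputable def idealNorm {A : Type*} [CommRing A] (𝔞 : Ideal A) : ℕ := Nat.card (A ⧸ 𝔞)

/-- The set of nonzero prime ideals of `A` dividing `𝔞`. -/
def primesDvd {A : Type*} [CommRing A] (𝔞 : Ideal A) : Set (Ideal A) :=
  {𝔭 | 𝔭.IsPrime ∧ 𝔭 ≠ ⊥ ∧ 𝔭 ∣ 𝔞}

/-- `θ(𝔞) = ∏_{𝔭 ∣ 𝔞} (1 - 1/|𝔭|)⁻¹`, the product over the nonzero primes dividing `𝔞`. -/
noncomputable def theta {A : Type*} [CommRing A] (𝔞 : Ideal A) : ℝ :=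
  ∏ᶠ 𝔭 ∈ primesDvd 𝔞, (1 - (idealNorm 𝔭 : ℝ)⁻¹)⁻¹

/-!
By the Chinese remainder theorem `A ⧸ 𝔞 ≅ ∏_{𝔭 ∣ 𝔞} A ⧸ 𝔭 ^ e_𝔭`, and `GL_r` of a product of rings
is the product of the `GL_r`, so it suffices to count `GL_r (A ⧸ 𝔭 ^ e)`. Reduction modulo `𝔭` is a
surjective local homomorphism `A ⧸ 𝔭 ^ e → A ⧸ 𝔭` (its kernel is nilpotent), so a matrix over
`A ⧸ 𝔭 ^ e` is invertible iff its reduction is: `GL_r (A ⧸ 𝔭 ^ e)` is the full preimage of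
`GL_r (A ⧸ 𝔭)`, and every fibre of the reduction map on matrices has `(|𝔭 ^ e| / |𝔭|) ^ (r ^ 2)`
elements. The count over the finite field `A ⧸ 𝔭` is `∏_{i < r} (q ^ r - q ^ i)`.
-/

open Finset UniqueFactorizationMonoid

theorem AddMonoidHom.card_preimage_of_surjective {G H : Type*} [AddGroup G] [AddGroup H]
    (f : G →+ H) (hf : Function.Surjective f) (t : Set H) :
    Nat.card (f ⁻¹' t) = Nat.card f.ker * Nat.card t := by
  let e := QuotientAddGroup.quotientKerEquivOfSurjective f hf
  change Nat.card (QuotientAddGroup.mk ⁻¹' (e ⁻¹' t)) = _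
  rw [Nat.card_congr (QuotientAddGroup.preimageMkEquivAddSubgroupProdSet _ _), Nat.card_prod]
  exact congrArg _ (Nat.card_congr (e.toEquiv.subtypeEquiv fun _ => Iff.rfl))

theorem Nat.card_units_eq_card_setOf_isUnit (M : Type*) [Monoid M] :
    Nat.card Mˣ = Nat.card {x : M | IsUnit x} :=
  Nat.card_congr (Equiv.ofInjective _ Units.val_injective)

theorem Nat.card_matrix (m n R : Type*) [Fintype m] [Fintype n] :
    Nat.card (Matrix m n R) = Nat.card R ^ (Fintype.card m * Fintype.card n) := by
  rw [Matrix, Nat.card_fun, Nat.card_fun, Nat.card_eq_fintype_card (α := m),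
    Nat.card_eq_fintype_card (α := n), ← pow_mul, mul_comm]

theorem Ideal.Quotient.isLocalHom_factor_pow {R : Type*} [CommRing R] (I : Ideal R) {n : ℕ}
    (hn : n ≠ 0) : IsLocalHom (Ideal.Quotient.factor (Ideal.pow_le_self (I := I) hn)) := by
  refine ⟨fun x hx => ?_⟩
  obtain ⟨x, rfl⟩ := Ideal.Quotient.mk_surjective x
  exact (Ideal.Quotient.isUnit_mk_pow_iff_isUnit_mk I hn).mpr hx

namespace Matrix

variable {n : Type*} [Fintype n] [DecidableEq n]

theorem isUnit_map_iff {R S : Type*} [CommRing R] [CommRing S] (f : R →+* S) [IsLocalHom f]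
    (M : Matrix n n R) : IsUnit (M.map f) ↔ IsUnit M := by
  rw [isUnit_iff_isUnit_det, isUnit_iff_isUnit_det, ← RingHom.mapMatrix_apply, ← RingHom.map_det,
    _root_.isUnit_map_iff]

theorem card_GL_mul_card_pow_eq_card_pow_mul_card_GL {R S : Type*} [CommRing R] [CommRing S]
    (f : R →+* S) (hf : Function.Surjective f) [IsLocalHom f] :
    Nat.card (GL n R) * Nat.card S ^ (Fintype.card n ^ 2) =
      Nat.card R ^ (Fintype.card n ^ 2) * Nat.card (GL n S) := by
  let F := (f.mapMatrix (m := n)).toAddMonoidHom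
  have hF : Function.Surjective F := fun N =>
    ⟨N.map (Function.surjInv hf), by ext; exact Function.surjInv_eq hf _⟩
  have hGL : Nat.card (GL n R) = Nat.card F.ker * Nat.card (GL n S) := by
    rw [Nat.card_units_eq_card_setOf_isUnit, Nat.card_units_eq_card_setOf_isUnit,
      ← F.card_preimage_of_surjective hF]
    congr! 2
    ext M
    exact (isUnit_map_iff f M).symm
  have hMatrix : Nat.card (Matrix n n R) = Nat.card F.ker * Nat.card (Matrix n n S) := by
    simpa using F.card_preimage_of_surjective hF Set.univ
  rw [sq, ← Nat.card_matrix, ← Nat.card_matrix, hGL, hMatrix]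
  ring

theorem card_GL_pi {ι : Type*} [Fintype ι] (R : ι → Type*) [∀ i, CommRing (R i)] :
    Nat.card (GL n (∀ i, R i)) = ∏ i, Nat.card (GL n (R i)) := by
  rw [Nat.card_congr ((Units.mapEquiv piRingEquiv.toMulEquiv).trans MulEquiv.piUnits).toEquiv,
    Nat.card_pi]

theorem card_GL_fin_field {𝔽 : Type*} [Field 𝔽] [Finite 𝔽] (r : ℕ) :
    (Nat.card (GL (Fin r) 𝔽) : ℝ) =
      (Nat.card 𝔽 : ℝ) ^ (r ^ 2) * ∏ i ∈ Icc 1 r, (1 - ((Nat.card 𝔽 : ℝ) ^ i)⁻¹) := by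
  have := Fintype.ofFinite 𝔽
  rw [card_GL_field, Nat.card_eq_fintype_card]
  set q := Fintype.card 𝔽
  have hfactor : ∀ i ∈ range r,
      ((q ^ r - q ^ i : ℕ) : ℝ) = (q : ℝ) ^ r * (1 - ((q : ℝ) ^ (r - i))⁻¹) := by
    intro i hi
    obtain ⟨k, rfl⟩ := Nat.exists_eq_add_of_le (mem_range.1 hi).le
    have : (q : ℝ) ≠ 0 := by positivity
    rw [Nat.cast_sub (Nat.pow_le_pow_right Fintype.card_pos (by omega)), Nat.add_sub_cancel_left]
    field_simp
    push_cast
    ring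
  rw [Nat.cast_prod, Fin.prod_univ_eq_prod_range (fun i => ((q ^ r - q ^ i : ℕ) : ℝ)),
    prod_congr rfl hfactor, prod_mul_distrib, prod_const, card_range, ← pow_mul, ← sq,
    ← Ico_add_one_right_eq_Icc, prod_Ico_eq_prod_range, ← prod_range_reflect]
  refine congrArg _ (prod_congr rfl fun i hi => ?_)
  have := mem_range.1 hi
  rw [show r - (r - 1 - i) = 1 + i by omega]

theorem card_GL_fin_of_isLocalHom_field {R 𝔽 : Type*} [CommRing R] [Field 𝔽] [Finite 𝔽]
    (f : R →+* 𝔽) (hf : Function.Surjective f) [IsLocalHom f] (r : ℕ) :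
    (Nat.card (GL (Fin r) R) : ℝ) =
      (Nat.card R : ℝ) ^ (r ^ 2) * ∏ i ∈ Icc 1 r, (1 - ((Nat.card 𝔽 : ℝ) ^ i)⁻¹) := by
  have hcount := congrArg (Nat.cast (R := ℝ)) (card_GL_mul_card_pow_eq_card_pow_mul_card_GL
    (n := Fin r) f hf)
  push_cast at hcount
  rw [Fintype.card_fin, card_GL_fin_field] at hcount
  have : (Nat.card 𝔽 : ℝ) ^ (r ^ 2) ≠ 0 := pow_ne_zero _ (Nat.cast_ne_zero.mpr Nat.card_pos.ne')
  refine mul_right_cancel₀ this ?_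
  rw [hcount]
  ring

end Matrix

theorem card_GL_quotient_pow {R : Type*} [CommRing R] (𝔭 : Ideal R) [𝔭.IsMaximal]
    [Finite (R ⧸ 𝔭)] {e : ℕ} (he : e ≠ 0) (r : ℕ) :
    (Nat.card (GL (Fin r) (R ⧸ 𝔭 ^ e)) : ℝ) =
      (Nat.card (R ⧸ 𝔭 ^ e) : ℝ) ^ (r ^ 2) *
        ∏ i ∈ Icc 1 r, (1 - ((Nat.card (R ⧸ 𝔭) : ℝ) ^ i)⁻¹) :=
  letI := Ideal.Quotient.field 𝔭
  haveI := Ideal.Quotient.isLocalHom_factor_pow 𝔭 he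
  Matrix.card_GL_fin_of_isLocalHom_field _ (Ideal.Quotient.factor_surjective _) r

section DedekindDomain

variable {A : Type*} [CommRing A] [IsDedekindDomain A]

theorem primesDvd_eq_factors_toFinset {𝔞 : Ideal A} (h𝔞 : 𝔞 ≠ ⊥) :
    primesDvd 𝔞 = (factors 𝔞).toFinset := by
  ext 𝔭
  rw [Finset.mem_coe, Multiset.mem_toFinset, factors_eq_normalizedFactors,
    Ideal.mem_normalizedFactors_iff h𝔞, primesDvd, Set.mem_ofPred_eq, Ideal.dvd_iff_le]
  constructor
  · exact fun ⟨hp, _, hle⟩ => ⟨hp, hle⟩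
  · rintro ⟨hp, hle⟩
    exact ⟨hp, fun h => h𝔞 (le_bot_iff.mp (h ▸ hle)), hle⟩

theorem Ideal.isMaximal_of_mem_factors {𝔞 𝔭 : Ideal A} (h : 𝔭 ∈ factors 𝔞) : 𝔭.IsMaximal :=
  have hp := prime_of_factor 𝔭 h
  (Ideal.isPrime_of_prime hp).isMaximal hp.ne_zero

end DedekindDomain

theorem card_GL_quotient_general
    (A : Type*) [CommRing A] [IsDedekindDomain A]
    (hAfin : ∀ 𝔟 : Ideal A, 𝔟 ≠ ⊥ → Finite (A ⧸ 𝔟))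
    (𝔞 : Ideal A) (h𝔞 : 𝔞 ≠ ⊥) (r : ℕ) :
    Finite (GL (Fin r) (A ⧸ 𝔞)) ∧
    (Nat.card (GL (Fin r) (A ⧸ 𝔞)) : ℝ) =
      (idealNorm 𝔞 : ℝ) ^ (r ^ 2) *
        ∏ᶠ 𝔭 ∈ primesDvd 𝔞, ∏ i ∈ Finset.Icc 1 r, (1 - ((idealNorm 𝔭 : ℝ) ^ i)⁻¹) := by
  have := hAfin 𝔞 h𝔞
  refine ⟨inferInstance, ?_⟩
  let crt := IsDedekindDomain.quotientEquivPiFactors h𝔞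
  have hlocal (𝔭 : Ideal A) (h𝔭 : 𝔭 ∈ factors 𝔞) :
      (Nat.card (GL (Fin r) (A ⧸ 𝔭 ^ (factors 𝔞).count 𝔭)) : ℝ) =
        (Nat.card (A ⧸ 𝔭 ^ (factors 𝔞).count 𝔭) : ℝ) ^ (r ^ 2) *
          ∏ i ∈ Icc 1 r, (1 - ((idealNorm 𝔭 : ℝ) ^ i)⁻¹) := by
    have := Ideal.isMaximal_of_mem_factors h𝔭
    have := hAfin 𝔭 (prime_of_factor _ h𝔭).ne_zero
    exact card_GL_quotient_pow 𝔭 (Multiset.count_ne_zero.mpr h𝔭) r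
  rw [primesDvd_eq_factors_toFinset h𝔞, finprod_mem_coe_finset, ← prod_coe_sort, idealNorm,
    Nat.card_congr (Units.mapEquiv crt.mapMatrix.toMulEquiv).toEquiv, Matrix.card_GL_pi,
    Nat.card_congr crt.toEquiv, Nat.card_pi]
  push_cast
  rw [prod_congr rfl fun (𝔭 : (factors 𝔞).toFinset) _ => hlocal 𝔭 (Multiset.mem_toFinset.mp 𝔭.2),
    prod_mul_distrib, prod_pow]

/-- **Lemma (order of `GL_r(A ⧸ 𝔞)`).**
Let `A` be a Dedekind domain, not a field, all of whose proper quotients are finite, let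
`𝔞 ⊆ A` be a nonzero ideal and `r ≥ 1`. Then `GL_r(A ⧸ 𝔞)` is finite, of cardinality
`|𝔞|^(r²) · ∏_{𝔭 ∣ 𝔞} ∏_{i=1}^{r} (1 - |𝔭|^{-i})`. -/
theorem card_GL_quotient
    (A : Type*) [CommRing A] [IsDomain A] [IsDedekindDomain A] (hA : ¬IsField A)
    (hAfin : ∀ 𝔟 : Ideal A, 𝔟 ≠ ⊥ → Finite (A ⧸ 𝔟))
    (𝔞 : Ideal A) (h𝔞 : 𝔞 ≠ ⊥) (r : ℕ) (hr : 1 ≤ r) :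
    Finite (GL (Fin r) (A ⧸ 𝔞)) ∧
    (Nat.card (GL (Fin r) (A ⧸ 𝔞)) : ℝ) =
      (idealNorm 𝔞 : ℝ) ^ (r ^ 2) *
        ∏ᶠ 𝔭 ∈ primesDvd 𝔞, ∏ i ∈ Finset.Icc 1 r, (1 - ((idealNorm 𝔭 : ℝ) ^ i)⁻¹) :=
  card_GL_quotient_general A hAfin 𝔞 h𝔞 r
end

section
/- Let K be a field with algebraic closure K̄, let r ≥ 1, and for each i = 1,…,r let K ⊆ K_i ⊆ L_i ⊆ K̄ be intermediate fields with [L_i:K] finite. Then (∏_{i=1}^r [K_i:K]) / [K_1⋯K_r : K] ≤ (∏_{i=1}^r [L_i:K]) / [L_1⋯L_r : K], where K_1⋯K_r and L_1⋯L_r denote the composita (joins) of the respective fields inside K̄. -/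
/-!
By the tower law, `[Lᵢ:K] = [Kᵢ:K]·[Lᵢ:Kᵢ]` and `[⨆ Lᵢ:K] = [⨆ Kᵢ:K]·[⨆ Lᵢ:⨆ Kᵢ]`, so the
inequality is `[⨆ Lᵢ:⨆ Kᵢ] ≤ ∏ [Lᵢ:Kᵢ]`. Passing through `E ⊔ E' ≤ L ⊔ E' ≤ L ⊔ L'`, this reduces
to `[L ⊔ M:E ⊔ M] ≤ [L:E]` for `E ≤ L`, which holds because `L ⊔ M` is generated over `E ⊔ M` by
`L`, hence by a basis of `L/E`.
-/

open IntermediateField Module Cardinal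

namespace IntermediateField
variable {K Ω : Type*} [Field K] [Field Ω] [Algebra K Ω]

theorem finiteDimensional_of_le {E L : IntermediateField K Ω} (h : E ≤ L)
    [FiniteDimensional K L] : FiniteDimensional K E :=
  .of_injective (inclusion h).toLinearMap (inclusion h).injective

theorem relrank_lt_aleph0 (E L : IntermediateField K Ω) [FiniteDimensional K L] :
    relrank E L < ℵ₀ :=
  (Cardinal.le_of_dvd rank_pos.ne' (relrank_dvd_rank_bot E L)).trans_lt (rank_lt_aleph0 K L)

theorem relrank_sup_right_le {E L : IntermediateField K Ω} (h : E ≤ L)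
    (halg : Algebra.IsAlgebraic E (extendScalars h)) (M : IntermediateField K Ω) :
    relrank (E ⊔ M) (L ⊔ M) ≤ relrank E L := by
  have h' : E ⊔ M ≤ L ⊔ M := sup_le_sup_right h M
  have hadj : extendScalars h' = adjoin ↥(E ⊔ M) (L : Set Ω) := by
    apply restrictScalars_injective K
    rw [extendScalars_restrictScalars, restrictScalars_adjoin_eq_sup, adjoin_self,
      sup_right_comm, sup_eq_right.mpr h]
  let _ : Algebra E ↥(E ⊔ M) := (inclusion le_sup_left).toAlgebra
  have : IsScalarTower E ↥(E ⊔ M) Ω := .of_algebraMap_eq' rfl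
  rw [relrank_eq_rank_of_le h', relrank_eq_rank_of_le h, hadj]
  have := adjoin_rank_le_of_isAlgebraic ↥(E ⊔ M) (extendScalars h) (Or.inr halg)
  rwa [coe_extendScalars] at this

theorem relfinrank_sup_right_le {E L : IntermediateField K Ω} (h : E ≤ L)
    [FiniteDimensional K L] (M : IntermediateField K Ω) :
    relfinrank (E ⊔ M) (L ⊔ M) ≤ relfinrank E L := by
  have hfin := relrank_lt_aleph0 E L
  have : FiniteDimensional E (extendScalars h) := by
    rwa [relrank_eq_rank_of_le h, rank_lt_aleph0_iff] at hfin
  exact toNat_le_toNat (relrank_sup_right_le h (Algebra.IsAlgebraic.of_finite _ _) M) hfin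

theorem relfinrank_sup_le_mul {E L E' L' : IntermediateField K Ω} (h : E ≤ L) (h' : E' ≤ L')
    [FiniteDimensional K L] [FiniteDimensional K L'] :
    relfinrank (E ⊔ E') (L ⊔ L') ≤ relfinrank E L * relfinrank E' L' := by
  rw [← relfinrank_mul_relfinrank (sup_le_sup_right h E') (sup_le_sup_left h' L)]
  gcongr
  · exact relfinrank_sup_right_le h E'
  · rw [sup_comm L, sup_comm L]
    exact relfinrank_sup_right_le h' L

theorem relfinrank_biSup_le_prod {ι : Type*} (s : Finset ι) {E L : ι → IntermediateField K Ω}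
    (h : ∀ i, E i ≤ L i) [∀ i, FiniteDimensional K (L i)] :
    relfinrank (⨆ i ∈ s, E i) (⨆ i ∈ s, L i) ≤ ∏ i ∈ s, relfinrank (E i) (L i) := by
  classical
  induction s using Finset.induction_on with
  | empty => simp
  | insert a s ha ih =>
    have hs : ⨆ i ∈ s, E i ≤ ⨆ i ∈ s, L i := iSup₂_mono fun i _ ↦ h i
    rw [Finset.iSup_insert, Finset.iSup_insert, Finset.prod_insert ha]
    exact (relfinrank_sup_le_mul (h a) hs).trans (by gcongr)

theorem relfinrank_iSup_le_prod {ι : Type*} [Fintype ι] {E L : ι → IntermediateField K Ω}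
    (h : ∀ i, E i ≤ L i) [∀ i, FiniteDimensional K (L i)] :
    relfinrank (⨆ i, E i) (⨆ i, L i) ≤ ∏ i, relfinrank (E i) (L i) := by
  simpa using relfinrank_biSup_le_prod Finset.univ h

theorem prod_finrank_mul_finrank_iSup_le {ι : Type*} [Fintype ι]
    {E L : ι → IntermediateField K Ω} (h : ∀ i, E i ≤ L i) [∀ i, FiniteDimensional K (L i)] :
    (∏ i, finrank K (E i)) * finrank K ↥(⨆ i, L i)
      ≤ (∏ i, finrank K (L i)) * finrank K ↥(⨆ i, E i) := by
  simp_rw [← finrank_bot_mul_relfinrank (iSup_mono h), ← finrank_bot_mul_relfinrank (h _),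
    Finset.prod_mul_distrib]
  grw [relfinrank_iSup_le_prod h]
  exact le_of_eq (by ring)

end IntermediateField

theorem composita_degree_ratio_le_general
    (K Kbar : Type*) [Field K] [Field Kbar] [Algebra K Kbar]
    (r : ℕ)
    (Ki Li : Fin r → IntermediateField K Kbar)
    (hKL : ∀ i, Ki i ≤ Li i)
    (hfin : ∀ i, FiniteDimensional K (Li i)) :
    (∏ i, (Module.finrank K (Ki i) : ℝ)) / (Module.finrank K ↥(⨆ i, Ki i) : ℝ)
      ≤ (∏ i, (Module.finrank K (Li i) : ℝ)) / (Module.finrank K ↥(⨆ i, Li i) : ℝ) := by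
  have : FiniteDimensional K ↥(⨆ i, Ki i) := finiteDimensional_of_le (iSup_mono hKL)
  rw [div_le_div_iff₀ (mod_cast finrank_pos) (mod_cast finrank_pos)]
  exact_mod_cast prod_finrank_mul_finrank_iSup_le hKL

/-- **Lemma (composita of field extensions).**
Let `K` be a field with algebraic closure `K̄`, and for `i = 1, …, r` (with `r ≥ 1`) let
`K ⊆ Kᵢ ⊆ Lᵢ ⊆ K̄` be intermediate fields with `Lᵢ/K` finite. Then
`(∏ᵢ [Kᵢ:K]) / [K₁⋯K_r : K] ≤ (∏ᵢ [Lᵢ:K]) / [L₁⋯L_r : K]`. -/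
theorem composita_degree_ratio_le
    (K Kbar : Type*) [Field K] [Field Kbar] [Algebra K Kbar] [IsAlgClosure K Kbar]
    (r : ℕ) (hr : 1 ≤ r)
    (Ki Li : Fin r → IntermediateField K Kbar)
    (hKL : ∀ i, Ki i ≤ Li i)
    (hfin : ∀ i, FiniteDimensional K (Li i)) :
    (∏ i, (Module.finrank K (Ki i) : ℝ)) / (Module.finrank K ↥(⨆ i, Ki i) : ℝ)
      ≤ (∏ i, (Module.finrank K (Li i) : ℝ)) / (Module.finrank K ↥(⨆ i, Li i) : ℝ) :=
  composita_degree_ratio_le_general K Kbar r Ki Li hKL hfin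
end
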